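/- arXiv:2602.08681 — 2 statements merged into one kernel-verified Lean document; each statement's English description precedes it below -/
import Mathlib

section
/- Let h(x,y) = y³ - (3/2)·x·y² + x·y. For x ≥ 2, the function h'(x) := max_{y ∈ [0,1]} h(x,y) satisfies h'(x) = h(x, x/2 - √(9x² - 12x)/6), and h' is NOT a polynomial in x (there is no polynomial p with p(x) = h'(x) for all x ≥ 2). -/
open Polynomial

/-- For `h(x,y) = y³ - 1.5·x·y² + x·y` and `x ≥ 2`, the maximum of `h(x,·)` over
`[0,1]` is attained at `y = x/2 - √(9x² - 12x)/6`, and the resulting function of `x`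
is not a polynomial. -/
theorem stmt1 :
    (∀ x : ℝ, 2 ≤ x →
      IsGreatest ((fun y : ℝ => y ^ 3 - 1.5 * x * y ^ 2 + x * y) '' Set.Icc (0 : ℝ) 1)
        ((fun y : ℝ => y ^ 3 - 1.5 * x * y ^ 2 + x * y)
          (x / 2 - Real.sqrt (9 * x ^ 2 - 12 * x) / 6))) ∧
    ¬ ∃ p : Polynomial ℝ, ∀ x : ℝ, 2 ≤ x →
        p.eval x =
          (fun y : ℝ => y ^ 3 - 1.5 * x * y ^ 2 + x * y)
            (x / 2 - Real.sqrt (9 * x ^ 2 - 12 * x) / 6) := by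
  constructor
  · intro x hx
    have harg : (0:ℝ) ≤ 9 * x ^ 2 - 12 * x := by nlinarith
    set s := Real.sqrt (9 * x ^ 2 - 12 * x) with hsdef
    have hs0 : 0 ≤ s := Real.sqrt_nonneg _
    have hs2 : s ^ 2 = 9 * x ^ 2 - 12 * x := Real.sq_sqrt harg
    have hsle : s ≤ 3 * x := by nlinarith
    have hsge : 3 * x - 6 ≤ s := by nlinarith
    constructor
    · exact ⟨x / 2 - s / 6, ⟨by linarith, by linarith⟩, rfl⟩
    · rintro z ⟨y, ⟨hy0, hy1⟩, rfl⟩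
      have key : (x/2 - s/6) ^ 3 - 1.5 * x * (x/2 - s/6) ^ 2 + x * (x/2 - s/6)
          - (y ^ 3 - 1.5 * x * y ^ 2 + x * y)
          = (y - (x/2 - s/6)) ^ 2 * (x/2 + s/3 - y) := by
        linear_combination (-(s/72) + (x - 2*y)/24) * hs2
      have hfac : 0 ≤ (y - (x/2 - s/6)) ^ 2 * (x/2 + s/3 - y) :=
        mul_nonneg (sq_nonneg _) (by linarith)
      dsimp only
      linarith [key, hfac]
  · rintro ⟨p, hp⟩
    have hval : ∀ x : ℝ, 2 ≤ x →
        432 * (p.eval x - (x^2/2 - x^3/4))^2 = x^3 * (3*x - 4)^3 := by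
      intro x hx
      have harg : (0:ℝ) ≤ 9 * x ^ 2 - 12 * x := by nlinarith
      set s := Real.sqrt (9 * x ^ 2 - 12 * x) with hsdef
      have hs2 : s ^ 2 = 9 * x ^ 2 - 12 * x := Real.sq_sqrt harg
      have h1 := hp x hx
      dsimp only at h1
      have h2 : p.eval x = x^2/2 - x^3/4 + s * (3*x^2 - 4*x)/36 := by
        rw [h1]; linear_combination (-(s/216)) * hs2
      rw [h2]
      linear_combination ((3*x^2 - 4*x)^2/3) * hs2
    have hAB : C (432:ℝ) * (p - (C (1/2) * X^2 - C (1/4) * X^3))^2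
        = X^3 * (C 3 * X - C 4)^3 := by
      apply Polynomial.eq_of_infinite_eval_eq
      apply Set.Infinite.mono (s := Set.Ici (2:ℝ)) _ (Set.Ici_infinite 2)
      intro x hx
      have := hval x hx
      simp only [Set.mem_setOf_eq, eval_mul, eval_pow, eval_sub, eval_add, eval_C, eval_X]
      linear_combination this
    set Q : ℝ[X] := C (1/2) * X^2 - C (1/4) * X^3 with hQ
    have hP0 : X ∣ (p - Q) := by
      rw [Polynomial.X_dvd_iff, Polynomial.coeff_zero_eq_eval_zero]
      have := congrArg (Polynomial.eval (0:ℝ)) hAB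
      simp only [eval_mul, eval_pow, eval_sub, eval_C, eval_X, hQ] at this
      have h0 : (p - Q).eval 0 = p.eval 0 := by simp [hQ]
      rw [h0]
      nlinarith [this, sq_nonneg (p.eval 0)]
    obtain ⟨P₁, hP₁⟩ := hP0
    have e1 : (X:ℝ[X])^2 * (C 432 * P₁^2) = X^2 * (X * (C 3 * X - C 4)^3) := by
      linear_combination hAB - C (432:ℝ) * ((p - Q) + X * P₁) * hP₁
    have h1 : C (432:ℝ) * P₁^2 = X * (C 3 * X - C 4)^3 :=
      mul_left_cancel₀ (pow_ne_zero 2 Polynomial.X_ne_zero) e1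
    have hP1 : X ∣ P₁ := by
      rw [Polynomial.X_dvd_iff, Polynomial.coeff_zero_eq_eval_zero]
      have := congrArg (Polynomial.eval (0:ℝ)) h1
      simp only [eval_mul, eval_pow, eval_sub, eval_C, eval_X] at this
      nlinarith [this, sq_nonneg (P₁.eval 0)]
    obtain ⟨P₂, hP₂⟩ := hP1
    have e2 : (X:ℝ[X]) * (C 432 * X * P₂^2) = X * ((C 3 * X - C 4)^3) := by
      linear_combination h1 - C (432:ℝ) * (P₁ + X * P₂) * hP₂
    have h2 : C (432:ℝ) * X * P₂^2 = (C 3 * X - C 4)^3 :=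
      mul_left_cancel₀ Polynomial.X_ne_zero e2
    have := congrArg (Polynomial.eval (0:ℝ)) h2
    simp only [eval_mul, eval_pow, eval_sub, eval_C, eval_X] at this
    norm_num at this
end

section
/- Let p(x₁,...,x_n) = ∏_{(i,j) ∈ E} p_{ij}(x_i, x_j) · ∏_i p_i(x_i) be a nonnegative function whose factor graph (V, E) is a rooted tree with root r. Then max over x of p equals max_{x_r} [ p_r(x_r) · ∏_{c ∈ children(r)} μ_c(x_r) ], where for each node i with parent j the message μ_i(x_j) is defined recursively as μ_i(x_j) = max_{x_i} p_{ij}(x_i, x_j) · p_i(x_i) · ∏_{c ∈ children(i)} μ_c(x_i). (Correctness of max-product message passing on trees.) -/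
open Finset

/-- Generalized partial product of the factorized function over a vertex set `T`,
with pending messages from children outside `S`. -/
private def Gval {n : ℕ} (r : Fin n) (par : Fin n → Fin n)
    (p1 : Fin n → ℝ → ℝ) (p2 : Fin n → Fin n → ℝ → ℝ → ℝ) (μ : Fin n → ℝ → ℝ)
    (S T : Finset (Fin n)) (x : Fin n → ℝ) : ℝ :=
  (∏ i ∈ T.filter (fun i => i ≠ r), p2 i (par i) (x i) (x (par i))) *
  ∏ i ∈ T, (p1 i (x i) *
    ∏ c ∈ univ.filter (fun c => par c = i ∧ c ≠ r ∧ c ∉ S), μ c (x i))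

private lemma mu_nonneg {n : ℕ} (r : Fin n) (par : Fin n → Fin n) (depth : Fin n → ℕ)
    (hdepth : ∀ i, i ≠ r → depth i = depth (par i) + 1)
    (D : Fin n → Set ℝ)
    (p1 : Fin n → ℝ → ℝ) (p2 : Fin n → Fin n → ℝ → ℝ → ℝ)
    (hp1 : ∀ i x, 0 ≤ p1 i x) (hp2 : ∀ i j x y, 0 ≤ p2 i j x y)
    (μ : Fin n → ℝ → ℝ)
    (hμ : ∀ i, i ≠ r → ∀ xj : ℝ,
      IsGreatest ((fun xi => p2 i (par i) xi xj * p1 i xi *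
          ∏ c ∈ Finset.univ.filter (fun c => par c = i ∧ c ≠ r), μ c xi) '' D i)
        (μ i xj)) :
    ∀ i, i ≠ r → ∀ x, 0 ≤ μ i x := by
  suffices h : ∀ m (i : Fin n), i ≠ r →
      (univ.filter (fun j => depth i < depth j)).card ≤ m → ∀ x, 0 ≤ μ i x by
    intro i hi x
    exact h _ i hi le_rfl x
  intro m
  induction m with
  | zero =>
    intro i hi hcard x
    obtain ⟨y, hy, hval⟩ := (hμ i hi x).1
    rw [← hval]
    refine mul_nonneg (mul_nonneg (hp2 _ _ _ _) (hp1 _ _)) (Finset.prod_nonneg ?_)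
    intro c hc
    simp only [mem_filter, mem_univ, true_and] at hc
    exfalso
    have h1 : c ∈ univ.filter (fun j => depth i < depth j) := by
      have := hdepth c hc.2
      rw [hc.1] at this
      simp only [mem_filter, mem_univ, true_and]
      omega
    have := Finset.card_pos.mpr ⟨c, h1⟩
    omega
  | succ m ih =>
    intro i hi hcard x
    obtain ⟨y, hy, hval⟩ := (hμ i hi x).1
    rw [← hval]
    refine mul_nonneg (mul_nonneg (hp2 _ _ _ _) (hp1 _ _)) (Finset.prod_nonneg ?_)
    intro c hc
    simp only [mem_filter, mem_univ, true_and] at hc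
    have hdc : depth c = depth i + 1 := by
      have := hdepth c hc.2
      rw [hc.1] at this
      exact this
    have hsub : univ.filter (fun j => depth c < depth j) ⊆
        univ.filter (fun j => depth i < depth j) := by
      intro j hj
      simp only [mem_filter, mem_univ, true_and] at hj ⊢
      omega
    have hss : univ.filter (fun j => depth c < depth j) ⊂
        univ.filter (fun j => depth i < depth j) := by
      refine (Finset.ssubset_iff_of_subset hsub).mpr ⟨c, ?_, ?_⟩
      · simp only [mem_filter, mem_univ, true_and]; omega
      · simp only [mem_filter, mem_univ, true_and]; omega
    have := Finset.card_lt_card hss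
    exact ih c hc.2 (by omega) y

private lemma Gval_nonneg {n : ℕ} (r : Fin n) (par : Fin n → Fin n)
    (p1 : Fin n → ℝ → ℝ) (p2 : Fin n → Fin n → ℝ → ℝ → ℝ) (μ : Fin n → ℝ → ℝ)
    (hp1 : ∀ i x, 0 ≤ p1 i x) (hp2 : ∀ i j x y, 0 ≤ p2 i j x y)
    (hmu : ∀ i, i ≠ r → ∀ x, 0 ≤ μ i x)
    (S T : Finset (Fin n)) (x : Fin n → ℝ) :
    0 ≤ Gval r par p1 p2 μ S T x := by
  unfold Gval
  refine mul_nonneg (Finset.prod_nonneg fun i _ => hp2 _ _ _ _) (Finset.prod_nonneg ?_)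
  intro i _
  refine mul_nonneg (hp1 _ _) (Finset.prod_nonneg ?_)
  intro c hc
  simp only [mem_filter, mem_univ, true_and] at hc
  exact hmu c hc.2.1 _

private lemma Gval_congr {n : ℕ} (r : Fin n) (par : Fin n → Fin n)
    (p1 : Fin n → ℝ → ℝ) (p2 : Fin n → Fin n → ℝ → ℝ → ℝ) (μ : Fin n → ℝ → ℝ)
    (S T : Finset (Fin n)) (hcl : ∀ i ∈ T, i ≠ r → par i ∈ T)
    (x x' : Fin n → ℝ) (h : ∀ i ∈ T, x i = x' i) :
    Gval r par p1 p2 μ S T x = Gval r par p1 p2 μ S T x' := by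
  unfold Gval
  congr 1
  · refine Finset.prod_congr rfl ?_
    intro i hi
    rw [mem_filter] at hi
    rw [h i hi.1, h (par i) (hcl i hi.1 hi.2)]
  · refine Finset.prod_congr rfl ?_
    intro i hi
    rw [h i hi]

private lemma step_lemma {n : ℕ} (r : Fin n) (par : Fin n → Fin n) (depth : Fin n → ℕ)
    (hdepth : ∀ i, i ≠ r → depth i = depth (par i) + 1)
    (D : Fin n → Set ℝ)
    (p1 : Fin n → ℝ → ℝ) (p2 : Fin n → Fin n → ℝ → ℝ → ℝ)
    (hp1 : ∀ i x, 0 ≤ p1 i x) (hp2 : ∀ i j x y, 0 ≤ p2 i j x y)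
    (μ : Fin n → ℝ → ℝ)
    (hμ : ∀ i, i ≠ r → ∀ xj : ℝ,
      IsGreatest ((fun xi => p2 i (par i) xi xj * p1 i xi *
          ∏ c ∈ Finset.univ.filter (fun c => par c = i ∧ c ≠ r), μ c xi) '' D i)
        (μ i xj))
    (hmu : ∀ i, i ≠ r → ∀ x, 0 ≤ μ i x) (M : ℝ)
    (T : Finset (Fin n)) (hrT : r ∈ T) (hcl : ∀ i ∈ T, i ≠ r → par i ∈ T)
    (l : Fin n) (hl : l ∉ T) (hpl : par l ∈ T)
    (hG : IsGreatest (Gval r par p1 p2 μ T T '' {x | ∀ i ∈ T, x i ∈ D i}) M) :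
    IsGreatest (Gval r par p1 p2 μ (insert l T) (insert l T) ''
      {x | ∀ i ∈ insert l T, x i ∈ D i}) M := by
  have hlr : l ≠ r := fun h => hl (h ▸ hrT)
  have hpll : par l ≠ l := by
    intro h
    have := hdepth l hlr
    rw [h] at this
    omega
  have hchild : ∀ c : Fin n, par c = l ∧ c ≠ r → c ∉ insert l T := by
    rintro c ⟨h1, h2⟩ hc
    rcases mem_insert.mp hc with rfl | hcT
    · exact hpll h1
    · exact hl (h1 ▸ hcl c hcT h2)
  -- claim 1: decomposition of Gval on insert l T
  have claim1 : ∀ x : Fin n → ℝ,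
      Gval r par p1 p2 μ (insert l T) (insert l T) x =
      Gval r par p1 p2 μ (insert l T) T x *
        (p2 l (par l) (x l) (x (par l)) * p1 l (x l) *
          ∏ c ∈ univ.filter (fun c => par c = l ∧ c ≠ r), μ c (x l)) := by
    intro x
    unfold Gval
    have h1 : (insert l T).filter (fun i => i ≠ r) =
        insert l (T.filter (fun i => i ≠ r)) := by
      rw [Finset.filter_insert, if_pos hlr]
    have hlnf : l ∉ T.filter (fun i => i ≠ r) := fun h => hl (mem_filter.mp h).1
    have h2 : univ.filter (fun c => par c = l ∧ c ≠ r ∧ c ∉ insert l T) =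
        univ.filter (fun c => par c = l ∧ c ≠ r) := by
      ext c
      simp only [mem_filter, mem_univ, true_and]
      constructor
      · rintro ⟨a, b, _⟩; exact ⟨a, b⟩
      · rintro ⟨a, b⟩; exact ⟨a, b, hchild c ⟨a, b⟩⟩
    rw [h1, Finset.prod_insert hlnf, Finset.prod_insert hl, h2]
    ring
  -- claim 2: decomposition of Gval on T
  have claim2 : ∀ x : Fin n → ℝ,
      Gval r par p1 p2 μ T T x =
      Gval r par p1 p2 μ (insert l T) T x * μ l (x (par l)) := by
    intro x
    unfold Gval
    have hbody : ∀ i ∈ T,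
        (p1 i (x i) * ∏ c ∈ univ.filter (fun c => par c = i ∧ c ≠ r ∧ c ∉ T), μ c (x i)) =
        (p1 i (x i) *
            ∏ c ∈ univ.filter (fun c => par c = i ∧ c ≠ r ∧ c ∉ insert l T), μ c (x i)) *
          (if i = par l then μ l (x i) else 1) := by
      intro i hi
      by_cases hip : i = par l
      · rw [if_pos hip]
        have hset : univ.filter (fun c => par c = i ∧ c ≠ r ∧ c ∉ T) =
            insert l (univ.filter (fun c => par c = i ∧ c ≠ r ∧ c ∉ insert l T)) := by
          ext c
          simp only [mem_insert, mem_filter, mem_univ, true_and]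
          constructor
          · rintro ⟨a, b, c3⟩
            by_cases hcl : c = l
            · exact Or.inl hcl
            · refine Or.inr ⟨a, b, ?_⟩
              intro hc
              rcases hc with rfl | hcT
              · exact hcl rfl
              · exact c3 hcT
          · rintro (rfl | ⟨a, b, c3⟩)
            · exact ⟨hip.symm, hlr, hl⟩
            · exact ⟨a, b, fun hc => c3 (Or.inr hc)⟩
        have hlnotin : l ∉ univ.filter (fun c => par c = i ∧ c ≠ r ∧ c ∉ insert l T) := by
          simp
        rw [hset, Finset.prod_insert hlnotin]
        ring
      · rw [if_neg hip, mul_one]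
        have hset : univ.filter (fun c => par c = i ∧ c ≠ r ∧ c ∉ T) =
            univ.filter (fun c => par c = i ∧ c ≠ r ∧ c ∉ insert l T) := by
          ext c
          simp only [mem_filter, mem_univ, true_and, mem_insert]
          constructor
          · rintro ⟨a, b, c3⟩
            refine ⟨a, b, ?_⟩
            rintro (rfl | hcT)
            · exact hip a.symm
            · exact c3 hcT
          · rintro ⟨a, b, c3⟩
            exact ⟨a, b, fun hc => c3 (Or.inr hc)⟩
        rw [hset]
    rw [Finset.prod_congr rfl hbody, Finset.prod_mul_distrib,
      Finset.prod_ite_eq' T (par l) (fun i => μ l (x i)), if_pos hpl]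
    ring
  have hAnn : ∀ x, 0 ≤ Gval r par p1 p2 μ (insert l T) T x :=
    Gval_nonneg r par p1 p2 μ hp1 hp2 hmu _ _
  constructor
  · -- membership
    obtain ⟨x, hx, hFx⟩ := hG.1
    obtain ⟨y, hyD, hyval⟩ := (hμ l hlr (x (par l))).1
    refine ⟨Function.update x l y, ?_, ?_⟩
    · intro i hi
      rcases mem_insert.mp hi with rfl | hiT
      · simpa using hyD
      · rw [Function.update_of_ne (ne_of_mem_of_not_mem hiT hl)]
        exact hx i hiT
    · rw [claim1]
      have h1 : Function.update x l y (par l) = x (par l) :=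
        Function.update_of_ne hpll _ _
      have h2 : Function.update x l y l = y := Function.update_self _ _ _
      have hA : Gval r par p1 p2 μ (insert l T) T (Function.update x l y) =
          Gval r par p1 p2 μ (insert l T) T x := by
        refine Gval_congr r par p1 p2 μ _ T hcl _ _ ?_
        intro i hi
        exact Function.update_of_ne (ne_of_mem_of_not_mem hi hl) _ _
      have hyval' : p2 l (par l) y (x (par l)) * p1 l y *
          ∏ c ∈ univ.filter (fun c => par c = l ∧ c ≠ r), μ c y = μ l (x (par l)) := hyval
      rw [h1, h2, hA, hyval', ← claim2, hFx]
  · -- upper bound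
    rintro z ⟨x, hx, rfl⟩
    rw [claim1]
    have hxl : x l ∈ D l := hx l (mem_insert_self l T)
    have hle : p2 l (par l) (x l) (x (par l)) * p1 l (x l) *
        ∏ c ∈ univ.filter (fun c => par c = l ∧ c ≠ r), μ c (x l) ≤ μ l (x (par l)) :=
      (hμ l hlr (x (par l))).2 ⟨x l, hxl, rfl⟩
    calc Gval r par p1 p2 μ (insert l T) T x *
          (p2 l (par l) (x l) (x (par l)) * p1 l (x l) *
            ∏ c ∈ univ.filter (fun c => par c = l ∧ c ≠ r), μ c (x l))
        ≤ Gval r par p1 p2 μ (insert l T) T x * μ l (x (par l)) :=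
          mul_le_mul_of_nonneg_left hle (hAnn x)
      _ = Gval r par p1 p2 μ T T x := (claim2 x).symm
      _ ≤ M := hG.2 ⟨x, fun i hi => hx i (mem_insert_of_mem hi), rfl⟩

/-- Correctness of max-product message passing on trees: if the messages `μ`
satisfy the recursive greatest-value equations along a rooted tree (given by a
parent function with a depth certificate), then the maximum of the root's
aggregated message equals the global maximum of the full factorized product. -/
theorem stmt16 (n : ℕ) (r : Fin n) (par : Fin n → Fin n) (depth : Fin n → ℕ)
    (hdr : depth r = 0) (hdepth : ∀ i, i ≠ r → depth i = depth (par i) + 1)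
    (D : Fin n → Set ℝ) (hD : ∀ i, IsCompact (D i)) (hDne : ∀ i, (D i).Nonempty)
    (p1 : Fin n → ℝ → ℝ) (p2 : Fin n → Fin n → ℝ → ℝ → ℝ)
    (hp1 : ∀ i x, 0 ≤ p1 i x) (hp2 : ∀ i j x y, 0 ≤ p2 i j x y)
    (hp1c : ∀ i, ContinuousOn (p1 i) (D i))
    (hp2c : ∀ i j, Continuous fun xy : ℝ × ℝ => p2 i j xy.1 xy.2)
    (μ : Fin n → ℝ → ℝ)
    (hμ : ∀ i, i ≠ r → ∀ xj : ℝ,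
      IsGreatest ((fun xi => p2 i (par i) xi xj * p1 i xi *
          ∏ c ∈ Finset.univ.filter (fun c => par c = i ∧ c ≠ r), μ c xi) '' D i)
        (μ i xj))
    (M : ℝ)
    (hM : IsGreatest ((fun xr => p1 r xr *
        ∏ c ∈ Finset.univ.filter (fun c => par c = r ∧ c ≠ r), μ c xr) '' D r) M) :
    IsGreatest ((fun x : Fin n → ℝ =>
        (∏ i ∈ Finset.univ.filter (fun i => i ≠ r),
          p2 i (par i) (x i) (x (par i))) * ∏ i, p1 i (x i)) ''
      {x : Fin n → ℝ | ∀ i, x i ∈ D i}) M := by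
  have hmu : ∀ i, i ≠ r → ∀ x, 0 ≤ μ i x :=
    mu_nonneg r par depth hdepth D p1 p2 hp1 hp2 μ hμ
  -- base case: T = {r}
  have base : IsGreatest (Gval r par p1 p2 μ {r} {r} ''
      {x | ∀ i ∈ ({r} : Finset (Fin n)), x i ∈ D i}) M := by
    have hval : ∀ x : Fin n → ℝ, Gval r par p1 p2 μ {r} {r} x =
        p1 r (x r) * ∏ c ∈ univ.filter (fun c => par c = r ∧ c ≠ r), μ c (x r) := by
      intro x
      unfold Gval
      have h1 : ({r} : Finset (Fin n)).filter (fun i => i ≠ r) = ∅ := by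
        ext i; simp
      have h2 : univ.filter (fun c => par c = r ∧ c ≠ r ∧ c ∉ ({r} : Finset (Fin n))) =
          univ.filter (fun c => par c = r ∧ c ≠ r) := by
        ext c
        simp only [mem_filter, mem_univ, true_and, Finset.mem_singleton]
        tauto
      rw [h1, Finset.prod_empty, one_mul, Finset.prod_singleton, h2]
    have himg : Gval r par p1 p2 μ {r} {r} ''
        {x | ∀ i ∈ ({r} : Finset (Fin n)), x i ∈ D i} =
        (fun xr => p1 r xr *
          ∏ c ∈ univ.filter (fun c => par c = r ∧ c ≠ r), μ c xr) '' D r := by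
      ext z
      constructor
      · rintro ⟨x, hx, rfl⟩
        exact ⟨x r, hx r (Finset.mem_singleton_self r), (hval x).symm⟩
      · rintro ⟨xr, hxr, rfl⟩
        refine ⟨fun _ => xr, ?_, hval _⟩
        intro i hi
        rw [Finset.mem_singleton] at hi
        subst hi
        exact hxr
    rw [himg]
    exact hM
  have key : ∀ k (T : Finset (Fin n)), r ∈ T → (∀ i ∈ T, i ≠ r → par i ∈ T) →
      T.card ≤ k + 1 →
      IsGreatest (Gval r par p1 p2 μ T T '' {x | ∀ i ∈ T, x i ∈ D i}) M := by
    intro k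
    induction k with
    | zero =>
      intro T hrT hclT hcard
      have hT : T = {r} := by
        refine Finset.eq_singleton_iff_unique_mem.mpr ⟨hrT, fun x hx => ?_⟩
        exact Finset.card_le_one.mp hcard x hx r hrT
      rw [hT]
      exact base
    | succ k ih =>
      intro T hrT hclT hcard
      by_cases hT : T = {r}
      · rw [hT]; exact base
      · have hne : (T.filter (fun i => i ≠ r)).Nonempty := by
          rw [Finset.filter_nonempty_iff]
          by_contra h
          push_neg at h
          exact hT (Finset.eq_singleton_iff_unique_mem.mpr
            ⟨hrT, fun x hx => h x hx⟩)
        obtain ⟨l, hlmem, hlmax⟩ := Finset.exists_max_image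
          (T.filter (fun i => i ≠ r)) depth hne
        rw [mem_filter] at hlmem
        have hrl : r ≠ l := Ne.symm hlmem.2
        have hrT' : r ∈ T.erase l := Finset.mem_erase.mpr ⟨hrl, hrT⟩
        have hclT' : ∀ i ∈ T.erase l, i ≠ r → par i ∈ T.erase l := by
          intro i hi hir
          have hiT : i ∈ T := Finset.mem_of_mem_erase hi
          refine Finset.mem_erase.mpr ⟨?_, hclT i hiT hir⟩
          intro hpil
          have h1 := hdepth i hir
          have h2 := hlmax i (mem_filter.mpr ⟨hiT, hir⟩)
          rw [hpil] at h1
          omega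
        have hplT' : par l ∈ T.erase l := by
          refine Finset.mem_erase.mpr ⟨?_, hclT l hlmem.1 hlmem.2⟩
          intro h
          have := hdepth l hlmem.2
          rw [h] at this
          omega
        have hcard' : (T.erase l).card ≤ k + 1 := by
          have := Finset.card_erase_of_mem hlmem.1
          omega
        have hG' := ih (T.erase l) hrT' hclT' hcard'
        have hstep := step_lemma r par depth hdepth D p1 p2 hp1 hp2 μ hμ hmu M
          (T.erase l) hrT' hclT' l (Finset.notMem_erase l T) hplT' hG'
        rwa [Finset.insert_erase hlmem.1] at hstep
  have hfin := key n univ (mem_univ r) (fun i _ _ => mem_univ _)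
    (by simp [Finset.card_univ])
  have hset : {x : Fin n → ℝ | ∀ i ∈ (univ : Finset (Fin n)), x i ∈ D i} =
      {x : Fin n → ℝ | ∀ i, x i ∈ D i} := by
    ext x; simp
  have hfun : ∀ x : Fin n → ℝ, Gval r par p1 p2 μ univ univ x =
      (∏ i ∈ Finset.univ.filter (fun i => i ≠ r),
        p2 i (par i) (x i) (x (par i))) * ∏ i, p1 i (x i) := by
    intro x
    unfold Gval
    congr 1
    refine Finset.prod_congr rfl ?_
    intro i _
    have : univ.filter (fun c => par c = i ∧ c ≠ r ∧ c ∉ (univ : Finset (Fin n))) =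
        (∅ : Finset (Fin n)) := by
      ext c; simp
    rw [this, Finset.prod_empty, mul_one]
  rw [hset] at hfin
  have himg : Gval r par p1 p2 μ univ univ '' {x : Fin n → ℝ | ∀ i, x i ∈ D i} =
      (fun x : Fin n → ℝ =>
        (∏ i ∈ Finset.univ.filter (fun i => i ≠ r),
          p2 i (par i) (x i) (x (par i))) * ∏ i, p1 i (x i)) ''
      {x : Fin n → ℝ | ∀ i, x i ∈ D i} :=
    Set.image_congr fun x _ => hfun x
  rwa [himg] at hfin
end
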